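/- (Characterization C2 of GLS.) A formula φ is a theorem of the Hilbert system GLS if and only if for every GL-model ⟨W,R,V⟩ there is a finite set Σ of formulas such that V(w, φ) = true for every Σ-reflexive world w ∈ W. -/
import Mathlib


/-- Modal formulas: propositional variables, ⊥, →, □. -/
inductive Formula : Type
  | var : ℕ → Formula
  | bot : Formula
  | imp : Formula → Formula → Formula
  | box : Formula → Formula
deriving DecidableEq

/-- Levels of sequents in GLS_seq: first level (⇒) and second level (⇛). -/
inductive SeqLevel : Type
  | one
  | two
deriving DecidableEq

/-- The set of subformulas of a formula. -/
def Formula.subf : Formula → Finset Formula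
  | .var p => {.var p}
  | .bot => {.bot}
  | .imp φ ψ => insert (.imp φ ψ) (φ.subf ∪ ψ.subf)
  | .box φ => insert (.box φ) φ.subf

/-- SF(Ψ,Φ): all subformulas of formulas in Ψ ∪ Φ. -/
def SF (Ψ Φ : Finset Formula) : Finset Formula := (Ψ ∪ Φ).biUnion Formula.subf

def Formula.isBox : Formula → Bool
  | .box _ => true
  | _ => false

def Formula.unbox : Formula → Formula
  | .box φ => φ
  | φ => φ

/-- Θ_□ = {φ : □φ ∈ Θ}. -/
def boxInv (Θ : Finset Formula) : Finset Formula :=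
  (Θ.filter fun ψ => ψ.isBox).image Formula.unbox

/-- The sequent calculus GLS_seq, on sequents of two levels.  The Bool parameter
records whether the cut rule may be used: `GLSSeq true` is provability in GLS_seq,
`GLSSeq false` is cut-free provability.  The first-level fragment is exactly GL_seq. -/
inductive GLSSeq : Bool → SeqLevel → Finset Formula → Finset Formula → Prop
  | init (c lv φ) : GLSSeq c lv {φ} {φ}
  | initBot (c lv) : GLSSeq c lv {Formula.bot} ∅
  | cut {lv Γ Δ} (φ) : GLSSeq true lv Γ (insert φ Δ) → GLSSeq true lv (insert φ Γ) Δ →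
      GLSSeq true lv Γ Δ
  | weak {c lv Γ Δ Γ' Δ'} : Γ ⊆ Γ' → Δ ⊆ Δ' → GLSSeq c lv Γ Δ → GLSSeq c lv Γ' Δ'
  | impL {c lv Γ Δ φ ψ} : GLSSeq c lv Γ (insert φ Δ) → GLSSeq c lv (insert ψ Γ) Δ →
      GLSSeq c lv (insert (.imp φ ψ) Γ) Δ
  | impR {c lv Γ Δ φ ψ} : GLSSeq c lv (insert φ Γ) (insert ψ Δ) →
      GLSSeq c lv Γ (insert (.imp φ ψ) Δ)
  | boxGL {c Γ φ} : GLSSeq c .one (Γ ∪ Γ.image .box ∪ {.box φ}) {φ} →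
      GLSSeq c .one (Γ.image .box) {.box φ}
  | boxL {c Γ Δ} (φ) : GLSSeq c .two (insert φ Γ) Δ → GLSSeq c .two (insert (.box φ) Γ) Δ
  | lift {c Γ Δ} : GLSSeq c .one Γ Δ → GLSSeq c .two Γ Δ

/-- The sequent calculus GL_seq (on first-level sequents only). -/
inductive GLSeq : Bool → Finset Formula → Finset Formula → Prop
  | init (c φ) : GLSeq c {φ} {φ}
  | initBot (c) : GLSeq c {Formula.bot} ∅
  | cut {Γ Δ} (φ) : GLSeq true Γ (insert φ Δ) → GLSeq true (insert φ Γ) Δ → GLSeq true Γ Δ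
  | weak {c Γ Δ Γ' Δ'} : Γ ⊆ Γ' → Δ ⊆ Δ' → GLSeq c Γ Δ → GLSeq c Γ' Δ'
  | impL {c Γ Δ φ ψ} : GLSeq c Γ (insert φ Δ) → GLSeq c (insert ψ Γ) Δ →
      GLSeq c (insert (.imp φ ψ) Γ) Δ
  | impR {c Γ Δ φ ψ} : GLSeq c (insert φ Γ) (insert ψ Δ) → GLSeq c Γ (insert (.imp φ ψ) Δ)
  | boxGL {c Γ φ} : GLSeq c (Γ ∪ Γ.image .box ∪ {.box φ}) {φ} → GLSeq c (Γ.image .box) {.box φ}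

/-- Proof trees of GLS_seq (cut included). -/
inductive GLSTree : SeqLevel → Finset Formula → Finset Formula → Type
  | init (lv φ) : GLSTree lv {φ} {φ}
  | initBot (lv) : GLSTree lv {Formula.bot} ∅
  | cut {lv Γ Δ} (φ) : GLSTree lv Γ (insert φ Δ) → GLSTree lv (insert φ Γ) Δ → GLSTree lv Γ Δ
  | weak {lv Γ Δ} (Γ' Δ' : Finset Formula) : Γ ⊆ Γ' → Δ ⊆ Δ' → GLSTree lv Γ Δ → GLSTree lv Γ' Δ'
  | impL {lv Γ Δ} (φ ψ) : GLSTree lv Γ (insert φ Δ) → GLSTree lv (insert ψ Γ) Δ →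
      GLSTree lv (insert (.imp φ ψ) Γ) Δ
  | impR {lv Γ Δ} (φ ψ) : GLSTree lv (insert φ Γ) (insert ψ Δ) → GLSTree lv Γ (insert (.imp φ ψ) Δ)
  | boxGL (Γ φ) : GLSTree .one (Γ ∪ Γ.image .box ∪ {.box φ}) {φ} → GLSTree .one (Γ.image .box) {.box φ}
  | boxL {Γ Δ} (φ) : GLSTree .two (insert φ Γ) Δ → GLSTree .two (insert (.box φ) Γ) Δ
  | lift {Γ Δ} : GLSTree .one Γ Δ → GLSTree .two Γ Δ

/-- The set of principal formulas of all (□L) rules occurring in a proof tree. -/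
def GLSTree.principals : ∀ {lv Γ Δ}, GLSTree lv Γ Δ → Finset Formula
  | _, _, _, .init _ _ => ∅
  | _, _, _, .initBot _ => ∅
  | _, _, _, .cut _ t₁ t₂ => t₁.principals ∪ t₂.principals
  | _, _, _, .weak _ _ _ _ t => t.principals
  | _, _, _, .impL _ _ t₁ t₂ => t₁.principals ∪ t₂.principals
  | _, _, _, .impR _ _ t => t.principals
  | _, _, _, .boxGL _ _ t => t.principals
  | _, _, _, .boxL φ t => insert (Formula.box φ) t.principals
  | _, _, _, .lift t => t.principals

/-- A proof tree bundled with its level and conclusion. -/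
abbrev PGLSTree : Type :=
  (lv : SeqLevel) × (Γ : Finset Formula) × (Δ : Finset Formula) × GLSTree lv Γ Δ

/-- The set of subproofs of a proof tree (including the tree itself). -/
def GLSTree.subproofs {lv Γ Δ} (t : GLSTree lv Γ Δ) : Set PGLSTree :=
  insert ⟨lv, Γ, Δ, t⟩ <|
    match lv, Γ, Δ, t with
    | _, _, _, .init _ _ => ∅
    | _, _, _, .initBot _ => ∅
    | _, _, _, .cut _ t₁ t₂ => t₁.subproofs ∪ t₂.subproofs
    | _, _, _, .weak _ _ _ _ t₁ => t₁.subproofs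
    | _, _, _, .impL _ _ t₁ t₂ => t₁.subproofs ∪ t₂.subproofs
    | _, _, _, .impR _ _ t₁ => t₁.subproofs
    | _, _, _, .boxGL _ _ t₁ => t₁.subproofs
    | _, _, _, .boxL _ t₁ => t₁.subproofs
    | _, _, _, .lift t₁ => t₁.subproofs

/-- Kripke satisfaction over a frame `R` with atomic valuation `v`. -/
def KSat {W : Type} (R : W → W → Prop) (v : W → ℕ → Prop) : Formula → W → Prop
  | .var p, w => v w p
  | .bot, _ => False
  | .imp φ ψ, w => KSat R v φ w → KSat R v ψ w
  | .box φ, w => ∀ w', R w w' → KSat R v φ w'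

/-- A GL-model: a nonempty, transitive, converse well-founded Kripke model. -/
structure GLModel where
  World : Type
  ne : Nonempty World
  R : World → World → Prop
  trans : Transitive R
  cwf : ∀ f : ℕ → World, ¬ ∀ i, R (f i) (f (i + 1))
  val : World → ℕ → Prop

/-- Truth of a formula at a world of a GL-model. -/
def GLModel.sat (M : GLModel) (w : M.World) (φ : Formula) : Prop := KSat M.R M.val φ w

/-- Truth of a sequent Γ ▸ Δ at a world: some γ ∈ Γ is false or some δ ∈ Δ is true. -/
def GLModel.seqTrue (M : GLModel) (w : M.World) (Γ Δ : Finset Formula) : Prop :=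
  (∃ γ ∈ Γ, ¬ M.sat w γ) ∨ (∃ δ ∈ Δ, M.sat w δ)

/-- w is Σ-reflexive: □α → α is true at w for every □α ∈ Σ. -/
def GLModel.reflexiveFor (M : GLModel) (w : M.World) (S : Finset Formula) : Prop :=
  ∀ α : Formula, Formula.box α ∈ S → M.sat w ((Formula.box α).imp α)

/-- Saturation conditions (→L), (→R) for first-level sequents. -/
def Saturated1 (Γ Δ : Finset Formula) : Prop :=
  (∀ φ ψ : Formula, φ.imp ψ ∈ Γ → φ ∈ Δ ∨ ψ ∈ Γ) ∧
  (∀ φ ψ : Formula, φ.imp ψ ∈ Δ → φ ∈ Γ ∧ ψ ∈ Δ)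

/-- Saturation for second-level sequents: additionally (□L). -/
def Saturated2 (Γ Δ : Finset Formula) : Prop :=
  Saturated1 Γ Δ ∧ ∀ φ : Formula, Formula.box φ ∈ Γ → φ ∈ Γ

def Saturated : SeqLevel → Finset Formula → Finset Formula → Prop
  | .one => Saturated1
  | .two => Saturated2

/-- The Hilbert system GL. -/
inductive GLHilbert : Formula → Prop
  | ax1 (φ ψ : Formula) : GLHilbert (φ.imp (ψ.imp φ))
  | ax2 (φ ψ χ : Formula) :
      GLHilbert ((φ.imp (ψ.imp χ)).imp ((φ.imp ψ).imp (φ.imp χ)))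
  | ax3 (φ : Formula) : GLHilbert (((φ.imp .bot).imp .bot).imp φ)
  | axK (φ ψ : Formula) :
      GLHilbert ((Formula.box (φ.imp ψ)).imp ((Formula.box φ).imp (Formula.box ψ)))
  | axLob (φ : Formula) :
      GLHilbert ((Formula.box ((Formula.box φ).imp φ)).imp (Formula.box φ))
  | mp {φ ψ} : GLHilbert (φ.imp ψ) → GLHilbert φ → GLHilbert ψ
  | nec {φ} : GLHilbert φ → GLHilbert (Formula.box φ)

/-- The Hilbert system GLS: theorems of GL and all □α → α, closed under modus ponens. -/
inductive GLSHilbert : Formula → Prop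
  | gl {φ} : GLHilbert φ → GLSHilbert φ
  | refl (α : Formula) : GLSHilbert ((Formula.box α).imp α)
  | mp {φ ψ} : GLSHilbert (φ.imp ψ) → GLSHilbert φ → GLSHilbert ψ

/-- Conjunction (encoded with → and ⊥) of a list of formulas; empty conjunction is ⊤. -/
def Formula.conj : List Formula → Formula
  | [] => Formula.bot.imp Formula.bot
  | φ :: l => ((φ.imp ((Formula.conj l).imp .bot)).imp .bot)

/-- Membership predicate for the canonical model: saturated first-level sequents over S
that are not cut-free provable in GLS_seq. -/
def W0pred (S : Finset Formula) (s : Finset Formula × Finset Formula) : Prop :=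
  Saturated1 s.1 s.2 ∧ ¬ GLSSeq false SeqLevel.one s.1 s.2 ∧ s.1 ∪ s.2 ⊆ S

/-- Worlds of the canonical model. -/
def W0 (S : Finset Formula) : Type := {s : Finset Formula × Finset Formula // W0pred S s}

/-- Accessibility of the canonical model: (Γ⇒Δ) R₀ (Γ'⇒Δ') iff Γ_□ ⊊ Γ'_□ and Γ_□ ⊆ Γ'. -/
def R0 (S : Finset Formula) (s t : W0 S) : Prop :=
  boxInv s.1.1 ⊂ boxInv t.1.1 ∧ boxInv s.1.1 ⊆ t.1.1

/-- Valuation of the canonical model: p is true at (Γ⇒Δ) iff p ∈ Γ. -/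
def V0 (S : Finset Formula) (s : W0 S) (p : ℕ) : Prop := Formula.var p ∈ s.1.1

/-- The extended set of worlds W = W₀ ∪ ℕ. -/
def Wext (S : Finset Formula) : Type := W0 S ⊕ ℕ

/-- The extended accessibility relation, with distinguished world `wp` in W₀. -/
def Rext (S : Finset Formula) (wp : W0 S) : Wext S → Wext S → Prop
  | Sum.inl x, Sum.inl y => R0 S x y
  | Sum.inr _, Sum.inl y => y = wp ∨ R0 S wp y
  | Sum.inr n, Sum.inr m => m < n
  | Sum.inl _, Sum.inr _ => False

/-- The extended valuation: worlds in ℕ behave like the distinguished world `wp`. -/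
def Vext (S : Finset Formula) (wp : W0 S) : Wext S → ℕ → Prop
  | Sum.inl x, p => V0 S x p
  | Sum.inr _, p => V0 S wp p

open Formula

/-- Derivability from a set of hypotheses over a base theory `T`. -/
inductive Ctx (T : Formula → Prop) (G : Set Formula) : Formula → Prop
  | ax {φ} : φ ∈ G → Ctx T G φ
  | thm {φ} : T φ → Ctx T G φ
  | mp {φ ψ} : Ctx T G (φ.imp ψ) → Ctx T G φ → Ctx T G ψ

theorem GLHilbert.id (a : Formula) : GLHilbert (a.imp a) :=
  .mp (.mp (.ax2 a (a.imp a) a) (.ax1 a (a.imp a))) (.ax1 a a)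

section CtxBasic
variable {T T' : Formula → Prop} {G G' : Set Formula}

theorem Ctx.mono (hT : ∀ ψ, T ψ → T' ψ) (hG : G ⊆ G') {φ} (h : Ctx T G φ) :
    Ctx T' G' φ := by
  induction h with
  | ax h => exact .ax (hG h)
  | thm h => exact .thm (hT _ h)
  | mp _ _ ih1 ih2 => exact .mp ih1 ih2

theorem Ctx.monoG (hG : G ⊆ G') {φ} (h : Ctx T G φ) : Ctx T G' φ :=
  h.mono (fun _ h => h) hG

variable (hT : ∀ ψ, GLHilbert ψ → T ψ)
include hT

theorem Ctx.deduction {a b} (h : Ctx T (insert a G) b) : Ctx T G (a.imp b) := by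
  induction h with
  | @ax φ h =>
    rcases h with h | h
    · subst h; exact .thm (hT _ (GLHilbert.id _))
    · exact .mp (.thm (hT _ (.ax1 φ a))) (.ax h)
  | @thm φ h => exact .mp (.thm (hT _ (.ax1 φ a))) (.thm h)
  | @mp φ ψ _ _ ih1 ih2 =>
    exact .mp (.mp (.thm (hT _ (.ax2 a φ ψ))) ih1) ih2

omit hT in
theorem Ctx.undeduction {a b} (h : Ctx T G (a.imp b)) : Ctx T (insert a G) b :=
  .mp (h.monoG (Set.subset_insert _ _)) (.ax (Set.mem_insert _ _))

theorem Ctx.efq {φ} (h : Ctx T G Formula.bot) : Ctx T G φ :=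
  .mp (.thm (hT _ (.ax3 φ))) (.mp (.thm (hT _ (.ax1 .bot (φ.imp .bot)))) h)

theorem Ctx.dne {φ} (h : Ctx T G ((φ.imp .bot).imp .bot)) : Ctx T G φ :=
  .mp (.thm (hT _ (.ax3 φ))) h

end CtxBasic

theorem ctx_empty_glh {φ} (h : Ctx GLHilbert ∅ φ) : GLHilbert φ := by
  induction h with
  | ax h => exact absurd h (Set.notMem_empty _)
  | thm h => exact h
  | mp _ _ ih1 ih2 => exact ih1.mp ih2

theorem ctx_empty_gls {φ} (h : Ctx GLSHilbert ∅ φ) : GLSHilbert φ := by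
  induction h with
  | ax h => exact absurd h (Set.notMem_empty _)
  | thm h => exact h
  | mp _ _ ih1 ih2 => exact ih1.mp ih2

def listImp : List Formula → Formula → Formula
  | [], χ => χ
  | a :: l, χ => a.imp (listImp l χ)

theorem ctx_to_listImp {l : List Formula} {G χ}
    (h : Ctx GLHilbert (G ∪ {x | x ∈ l}) χ) : Ctx GLHilbert G (listImp l χ) := by
  induction l generalizing G with
  | nil => exact h.monoG (by simp)
  | cons a l ih =>
    have h1 : Ctx GLHilbert (insert a G ∪ {x | x ∈ l}) χ :=
      h.monoG (by intro x hx; simp at hx ⊢; tauto)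
    exact (ih h1).deduction (fun _ h => h)

theorem ctx_list_to_hilbert {l : List Formula} {χ}
    (h : Ctx GLHilbert {x | x ∈ l} χ) : GLHilbert (listImp l χ) :=
  ctx_empty_glh (ctx_to_listImp (h.monoG (by simp)))

theorem mp_list {T : Formula → Prop} {G : Set Formula} {l : List Formula} {χ}
    (h : Ctx T G (listImp l χ)) (hl : ∀ a ∈ l, Ctx T G a) : Ctx T G χ := by
  induction l with
  | nil => exact h
  | cons a l ih => exact ih (h.mp (hl a (by simp))) (fun b hb => hl b (by simp [hb]))

theorem box_listImp_aux (l : List Formula) (χ : Formula) :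
    GLHilbert ((Formula.box (listImp l χ)).imp (listImp (l.map .box) (.box χ))) := by
  induction l with
  | nil => exact GLHilbert.id _
  | cons a l ih =>
    show GLHilbert ((Formula.box ((a.imp (listImp l χ)))).imp
      ((Formula.box a).imp (listImp (l.map .box) (.box χ))))
    set G : Set Formula := insert (Formula.box a) (insert (Formula.box (a.imp (listImp l χ))) ∅)
      with hG
    have hA : Ctx GLHilbert G (Formula.box (a.imp (listImp l χ))) := .ax (by simp [hG])
    have hB : Ctx GLHilbert G (Formula.box a) := .ax (by simp [hG])
    have h1 : Ctx GLHilbert G (Formula.box (listImp l χ)) :=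
      (Ctx.mp (.thm (GLHilbert.axK a (listImp l χ))) hA).mp hB
    have h2 : Ctx GLHilbert G (listImp (l.map .box) (.box χ)) := (Ctx.thm ih).mp h1
    have h3 := h2.deduction (T := GLHilbert) (fun _ h => h)
    exact ctx_empty_glh (h3.deduction (fun _ h => h))

theorem box_listImp {l : List Formula} {χ} (h : GLHilbert (listImp l χ)) :
    GLHilbert (listImp (l.map .box) (.box χ)) :=
  (box_listImp_aux l χ).mp h.nec

/-! ### Conjunction encoding and the 4 axiom -/

def Fand (a b : Formula) : Formula := (a.imp (b.imp .bot)).imp .bot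

theorem and_elim_left (a b : Formula) : GLHilbert ((Fand a b).imp a) := by
  set G0 : Set Formula := insert (a.imp .bot) (insert (Fand a b) ∅) with hG
  have h1 : Ctx GLHilbert G0 (a.imp (b.imp .bot)) := by
    refine Ctx.deduction (fun _ h => h) ?_
    exact Ctx.efq (fun _ h => h)
      ((Ctx.ax (by simp [hG]) : Ctx GLHilbert _ (a.imp .bot)).mp (.ax (Set.mem_insert _ _)))
  have h2 : Ctx GLHilbert G0 Formula.bot :=
    (Ctx.ax (by simp [hG, Fand]) : Ctx GLHilbert G0 (Fand a b)).mp h1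
  have h3 := h2.deduction (T := GLHilbert) (fun _ h => h)
  have h4 : Ctx GLHilbert (insert (Fand a b) ∅) a := Ctx.dne (fun _ h => h) h3
  exact ctx_empty_glh (h4.deduction (fun _ h => h))

theorem and_elim_right (a b : Formula) : GLHilbert ((Fand a b).imp b) := by
  set G0 : Set Formula := insert (b.imp .bot) (insert (Fand a b) ∅) with hG
  have h1 : Ctx GLHilbert G0 (a.imp (b.imp .bot)) :=
    (Ctx.thm (GLHilbert.ax1 (b.imp .bot) a)).mp (.ax (by simp [hG]))
  have h2 : Ctx GLHilbert G0 Formula.bot :=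
    (Ctx.ax (by simp [hG, Fand]) : Ctx GLHilbert G0 (Fand a b)).mp h1
  have h3 := h2.deduction (T := GLHilbert) (fun _ h => h)
  have h4 : Ctx GLHilbert (insert (Fand a b) ∅) b := Ctx.dne (fun _ h => h) h3
  exact ctx_empty_glh (h4.deduction (fun _ h => h))

theorem and_intro (a b : Formula) : GLHilbert (a.imp (b.imp (Fand a b))) := by
  set G0 : Set Formula := insert (a.imp (b.imp .bot)) (insert b (insert a ∅)) with hG
  have h2 : Ctx GLHilbert G0 Formula.bot :=
    ((Ctx.ax (by simp [hG]) : Ctx GLHilbert G0 (a.imp (b.imp .bot))).mp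
      (.ax (by simp [hG]))).mp (.ax (by simp [hG]))
  have h3 := h2.deduction (T := GLHilbert) (fun _ h => h)
  have h4 := h3.deduction (T := GLHilbert) (fun _ h => h)
  exact ctx_empty_glh (h4.deduction (fun _ h => h))

theorem four (a : Formula) : GLHilbert ((Formula.box a).imp (Formula.box (Formula.box a))) := by
  set χ := Fand a (Formula.box a) with hχ
  have c1 : GLHilbert ((Formula.box χ).imp (Formula.box a)) :=
    (GLHilbert.axK χ a).mp (and_elim_left a (Formula.box a)).nec
  have c2 : GLHilbert ((Formula.box χ).imp (Formula.box (Formula.box a))) :=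
    (GLHilbert.axK χ (Formula.box a)).mp (and_elim_right a (Formula.box a)).nec
  have step1 : GLHilbert (a.imp ((Formula.box χ).imp χ)) := by
    set G0 : Set Formula := insert (Formula.box χ) (insert a ∅) with hG
    have ha : Ctx GLHilbert G0 a := .ax (by simp [hG])
    have hbox : Ctx GLHilbert G0 (Formula.box a) := (Ctx.thm c1).mp (.ax (by simp [hG]))
    have hand : Ctx GLHilbert G0 χ :=
      ((Ctx.thm (and_intro a (Formula.box a))).mp ha).mp hbox
    have h3 := hand.deduction (T := GLHilbert) (fun _ h => h)
    exact ctx_empty_glh (h3.deduction (fun _ h => h))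
  have step2 : GLHilbert ((Formula.box a).imp (Formula.box ((Formula.box χ).imp χ))) :=
    (GLHilbert.axK a ((Formula.box χ).imp χ)).mp step1.nec
  set G0 : Set Formula := insert (Formula.box a) ∅ with hG
  have h1 : Ctx GLHilbert G0 (Formula.box χ) :=
    (Ctx.thm (GLHilbert.axLob χ)).mp ((Ctx.thm step2).mp (.ax (by simp [hG])))
  have h2 : Ctx GLHilbert G0 (Formula.box (Formula.box a)) := (Ctx.thm c2).mp h1
  exact ctx_empty_glh (h2.deduction (fun _ h => h))

/-! ### The GL box rule, Hilbert style -/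

theorem gl_box_rule {l : List Formula} {ψ : Formula}
    (h : GLHilbert (listImp (l ++ l.map .box) ((Formula.box ψ).imp ψ))) :
    GLHilbert (listImp (l.map .box) (Formula.box ψ)) := by
  have h1 := box_listImp h
  rw [List.map_append] at h1
  set G : Set Formula := {x | x ∈ l.map Formula.box} with hG
  have hall : ∀ a ∈ l.map Formula.box ++ (l.map Formula.box).map Formula.box,
      Ctx GLHilbert G a := by
    intro a ha
    rcases List.mem_append.1 ha with ha | ha
    · exact .ax ha
    · rcases List.mem_map.1 ha with ⟨c, hc, rfl⟩
      rcases List.mem_map.1 hc with ⟨c', _, rfl⟩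
      exact (Ctx.thm (four c')).mp (.ax hc)
  have h2 : Ctx GLHilbert G (Formula.box ((Formula.box ψ).imp ψ)) :=
    mp_list (.thm h1) hall
  have h3 : Ctx GLHilbert G (Formula.box ψ) := (Ctx.thm (GLHilbert.axLob ψ)).mp h2
  exact ctx_list_to_hilbert h3

/-! ### Sequent-style provability -/

def FNeg (a : Formula) : Formula := a.imp .bot

def SeqCtx (Γ Δ : Finset Formula) : Set Formula := ↑Γ ∪ FNeg '' ↑Δ

def Prov (T : Formula → Prop) (Γ Δ : Finset Formula) : Prop :=
  Ctx T (SeqCtx Γ Δ) Formula.bot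

theorem seqCtx_insert_left (a : Formula) (Γ Δ : Finset Formula) :
    SeqCtx (insert a Γ) Δ = insert a (SeqCtx Γ Δ) := by
  ext x; simp [SeqCtx, FNeg]; tauto

theorem seqCtx_insert_right (a : Formula) (Γ Δ : Finset Formula) :
    SeqCtx Γ (insert a Δ) = insert (FNeg a) (SeqCtx Γ Δ) := by
  ext x; simp [SeqCtx, FNeg]; tauto

theorem seqCtx_mono {Γ Γ' Δ Δ' : Finset Formula} (h1 : Γ ⊆ Γ') (h2 : Δ ⊆ Δ') :
    SeqCtx Γ Δ ⊆ SeqCtx Γ' Δ' := by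
  intro x hx
  rcases hx with hx | ⟨d, hd, rfl⟩
  · exact Or.inl (h1 hx)
  · exact Or.inr ⟨d, h2 hd, rfl⟩


theorem Prov.mono {T} {Γ Γ' Δ Δ' : Finset Formula} (h1 : Γ ⊆ Γ') (h2 : Δ ⊆ Δ')
    (h : Prov T Γ Δ) : Prov T Γ' Δ' := h.monoG (seqCtx_mono h1 h2)

theorem mem_seqCtx_left {Γ Δ : Finset Formula} {a} (h : a ∈ Γ) : a ∈ SeqCtx Γ Δ :=
  Or.inl (by simpa using h)

theorem mem_seqCtx_right {Γ Δ : Finset Formula} {a} (h : a ∈ Δ) : FNeg a ∈ SeqCtx Γ Δ :=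
  Or.inr ⟨a, by simpa using h, rfl⟩

theorem prov_of_mem {T} {Γ Δ : Finset Formula} {a} (h1 : a ∈ Γ) (h2 : a ∈ Δ) :
    Prov T Γ Δ :=
  (Ctx.ax (mem_seqCtx_right h2) : Ctx T _ (FNeg a)).mp (.ax (mem_seqCtx_left h1))

theorem prov_of_bot {T} {Γ Δ : Finset Formula} (h1 : Formula.bot ∈ Γ) : Prov T Γ Δ :=
  .ax (mem_seqCtx_left h1)

section Inversion
variable {T : Formula → Prop} (hT : ∀ ψ, GLHilbert ψ → T ψ)
include hT

theorem prov_impL {Γ Δ : Finset Formula} {a b} (h : a.imp b ∈ Γ)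
    (h1 : Prov T Γ (insert a Δ)) (h2 : Prov T (insert b Γ) Δ) : Prov T Γ Δ := by
  rw [Prov, seqCtx_insert_right] at h1
  rw [Prov, seqCtx_insert_left] at h2
  have ha : Ctx T (SeqCtx Γ Δ) a := Ctx.dne hT (h1.deduction hT)
  have hb : Ctx T (SeqCtx Γ Δ) (b.imp .bot) := h2.deduction hT
  exact hb.mp ((Ctx.ax (mem_seqCtx_left h)).mp ha)

theorem prov_impR {Γ Δ : Finset Formula} {a b} (h : a.imp b ∈ Δ)
    (h1 : Prov T (insert a Γ) (insert b Δ)) : Prov T Γ Δ := by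
  rw [Prov, seqCtx_insert_left, seqCtx_insert_right, Set.insert_comm] at h1
  have hb : Ctx T (insert a (SeqCtx Γ Δ)) b := Ctx.dne hT (h1.deduction hT)
  have hab : Ctx T (SeqCtx Γ Δ) (a.imp b) := hb.deduction hT
  exact (Ctx.ax (mem_seqCtx_right h)).mp hab

end Inversion

theorem prov_boxL {Γ Δ : Finset Formula} {a} (h : Formula.box a ∈ Γ)
    (h1 : Prov GLSHilbert (insert a Γ) Δ) : Prov GLSHilbert Γ Δ := by
  rw [Prov, seqCtx_insert_left] at h1
  have ha : Ctx GLSHilbert (SeqCtx Γ Δ) a :=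
    (Ctx.thm (GLSHilbert.refl a)).mp (.ax (mem_seqCtx_left h))
  exact (h1.deduction (fun _ h => .gl h)).mp ha

theorem mem_boxInv {a : Formula} {Θ : Finset Formula} :
    a ∈ boxInv Θ ↔ Formula.box a ∈ Θ := by
  constructor
  · intro h
    rcases Finset.mem_image.1 h with ⟨b, hb, rfl⟩
    rcases Finset.mem_filter.1 hb with ⟨hbΘ, hbox⟩
    cases b with
    | box c => exact hbΘ
    | var p => simp [Formula.isBox] at hbox
    | bot => simp [Formula.isBox] at hbox
    | imp x y => simp [Formula.isBox] at hbox
  · intro h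
    exact Finset.mem_image.2 ⟨Formula.box a, Finset.mem_filter.2 ⟨h, rfl⟩, rfl⟩

theorem prov_boxGL {Γ Δ : Finset Formula} {ψ} (hψ : Formula.box ψ ∈ Δ)
    (h : Prov GLHilbert (boxInv Γ ∪ (boxInv Γ).image .box ∪ {Formula.box ψ}) {ψ}) :
    Prov GLHilbert Γ Δ := by
  set B := boxInv Γ with hB
  set l := B.toList with hl
  have hset : SeqCtx (B ∪ B.image .box ∪ {Formula.box ψ}) {ψ} =
      insert (FNeg ψ) (insert (Formula.box ψ) {x | x ∈ l ++ l.map .box}) := by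
    ext x
    simp [SeqCtx, FNeg, hl, Finset.mem_toList, eq_comm]
    try tauto
  rw [Prov, hset] at h
  have h1 : Ctx GLHilbert (insert (Formula.box ψ) {x | x ∈ l ++ l.map .box}) ψ :=
    Ctx.dne (fun _ h => h) (h.deduction (fun _ h => h))
  have h2 : Ctx GLHilbert {x | x ∈ l ++ l.map .box} ((Formula.box ψ).imp ψ) :=
    h1.deduction (fun _ h => h)
  have h3 := gl_box_rule (ctx_list_to_hilbert h2)
  have h4 : Ctx GLHilbert (SeqCtx Γ Δ) (Formula.box ψ) := by
    refine mp_list (.thm h3) ?_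
    intro a ha
    rcases List.mem_map.1 ha with ⟨c, hc, rfl⟩
    have : c ∈ boxInv Γ := by rwa [← Finset.mem_toList]
    exact .ax (mem_seqCtx_left (mem_boxInv.1 this))
  exact (Ctx.ax (mem_seqCtx_right hψ)).mp h4

/-! ### Subformulas -/

theorem self_mem_subf (φ : Formula) : φ ∈ φ.subf := by
  cases φ <;> simp [Formula.subf]

theorem subf_trans : ∀ {χ ψ : Formula}, ψ ∈ χ.subf → ψ.subf ⊆ χ.subf := by
  intro χ
  induction χ with
  | var p => intro ψ h; simp [Formula.subf] at h; subst h; simp [Formula.subf]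
  | bot => intro ψ h; simp [Formula.subf] at h; subst h; simp [Formula.subf]
  | imp a b iha ihb =>
    intro ψ h
    rw [Formula.subf, Finset.mem_insert, Finset.mem_union] at h
    rcases h with rfl | h | h
    · exact fun x hx => hx
    · exact (iha h).trans (by rw [Formula.subf]; intro x hx; simp [Finset.mem_union.2 (Or.inl hx)])
    · exact (ihb h).trans (by rw [Formula.subf]; intro x hx; simp [Finset.mem_union.2 (Or.inr hx)])
  | box a iha =>
    intro ψ h
    rw [Formula.subf, Finset.mem_insert] at h
    rcases h with rfl | h
    · exact fun x hx => hx
    · exact (iha h).trans (by rw [Formula.subf]; exact Finset.subset_insert _ _)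

theorem imp_left_mem_subf (a b : Formula) : a ∈ (a.imp b).subf := by
  rw [Formula.subf]; exact Finset.mem_insert_of_mem (Finset.mem_union_left _ (self_mem_subf a))

theorem imp_right_mem_subf (a b : Formula) : b ∈ (a.imp b).subf := by
  rw [Formula.subf]; exact Finset.mem_insert_of_mem (Finset.mem_union_right _ (self_mem_subf b))

theorem box_arg_mem_subf (a : Formula) : a ∈ (Formula.box a).subf := by
  rw [Formula.subf]; exact Finset.mem_insert_of_mem (self_mem_subf a)

/-! ### Saturation -/

def TL : SeqLevel → (Formula → Prop)
  | .one => GLHilbert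
  | .two => GLSHilbert

theorem hTL (lv : SeqLevel) : ∀ ψ, GLHilbert ψ → TL lv ψ := by
  cases lv
  · exact fun _ h => h
  · exact fun _ h => .gl h

theorem card_sdiff_insert_le (S A : Finset Formula) (a : Formula) :
    (S \ insert a A).card ≤ (S \ A).card :=
  Finset.card_le_card (Finset.sdiff_subset_sdiff (le_refl S) (Finset.subset_insert _ _))

theorem card_sdiff_insert_lt {S A : Finset Formula} {a : Formula} (haS : a ∈ S) (ha : a ∉ A) :
    (S \ insert a A).card < (S \ A).card := by
  apply Finset.card_lt_card
  constructor
  · exact Finset.sdiff_subset_sdiff (le_refl S) (Finset.subset_insert _ _)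
  · intro hsub
    have : a ∈ S \ A := Finset.mem_sdiff.2 ⟨haS, ha⟩
    have := hsub this
    simp at this

theorem saturate_aux {S : Finset Formula} (hS : ∀ ψ ∈ S, ψ.subf ⊆ S) (lv : SeqLevel) :
    ∀ n (Γ Δ : Finset Formula), (S \ Γ).card + (S \ Δ).card = n → Γ ⊆ S → Δ ⊆ S →
      ¬ Prov (TL lv) Γ Δ →
    ∃ Γ' Δ', Γ ⊆ Γ' ∧ Δ ⊆ Δ' ∧ Γ' ⊆ S ∧ Δ' ⊆ S ∧ ¬ Prov (TL lv) Γ' Δ' ∧ Saturated lv Γ' Δ' := by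
  intro n
  induction n using Nat.strong_induction_on with
  | _ n IH =>
  intro Γ Δ hn hΓ hΔ h
  by_cases h1 : ∃ a b, a.imp b ∈ Γ ∧ a ∉ Δ ∧ b ∉ Γ
  · obtain ⟨a, b, hab, haΔ, hbΓ⟩ := h1
    have haS : a ∈ S := hS _ (hΓ hab) (imp_left_mem_subf a b)
    have hbS : b ∈ S := hS _ (hΓ hab) (imp_right_mem_subf a b)
    by_cases hc : Prov (TL lv) Γ (insert a Δ)
    · have hc2 : ¬ Prov (TL lv) (insert b Γ) Δ := fun hp => h (prov_impL (hTL lv) hab hc hp)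
      have hm : (S \ insert b Γ).card + (S \ Δ).card < n := by
        rw [← hn]
        exact Nat.add_lt_add_right (card_sdiff_insert_lt hbS hbΓ) _
      obtain ⟨Γ', Δ', hg, hd, h3, h4, h5, h6⟩ :=
        IH _ hm (insert b Γ) Δ rfl (Finset.insert_subset hbS hΓ) hΔ hc2
      exact ⟨Γ', Δ', (Finset.subset_insert _ _).trans hg, hd, h3, h4, h5, h6⟩
    · have hm : (S \ Γ).card + (S \ insert a Δ).card < n := by
        rw [← hn]
        exact Nat.add_lt_add_left (card_sdiff_insert_lt haS haΔ) _
      obtain ⟨Γ', Δ', hg, hd, h3, h4, h5, h6⟩ :=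
        IH _ hm Γ (insert a Δ) rfl hΓ (Finset.insert_subset haS hΔ) hc
      exact ⟨Γ', Δ', hg, (Finset.subset_insert _ _).trans hd, h3, h4, h5, h6⟩
  · by_cases h2 : ∃ a b, a.imp b ∈ Δ ∧ (a ∉ Γ ∨ b ∉ Δ)
    · obtain ⟨a, b, hab, hor⟩ := h2
      have haS : a ∈ S := hS _ (hΔ hab) (imp_left_mem_subf a b)
      have hbS : b ∈ S := hS _ (hΔ hab) (imp_right_mem_subf a b)
      have hc : ¬ Prov (TL lv) (insert a Γ) (insert b Δ) :=
        fun hp => h (prov_impR (hTL lv) hab hp)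
      have hm : (S \ insert a Γ).card + (S \ insert b Δ).card < n := by
        rw [← hn]
        rcases hor with hor | hor
        · exact Nat.add_lt_add_of_lt_of_le (card_sdiff_insert_lt haS hor)
            (card_sdiff_insert_le S Δ b)
        · exact Nat.add_lt_add_of_le_of_lt (card_sdiff_insert_le S Γ a)
            (card_sdiff_insert_lt hbS hor)
      obtain ⟨Γ', Δ', hg, hd, h3, h4, h5, h6⟩ :=
        IH _ hm (insert a Γ) (insert b Δ) rfl (Finset.insert_subset haS hΓ)
          (Finset.insert_subset hbS hΔ) hc
      exact ⟨Γ', Δ', (Finset.subset_insert _ _).trans hg,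
        (Finset.subset_insert _ _).trans hd, h3, h4, h5, h6⟩
    · by_cases h3 : lv = SeqLevel.two ∧ ∃ a, Formula.box a ∈ Γ ∧ a ∉ Γ
      · obtain ⟨hlv, a, haΓ, haa⟩ := h3
        subst hlv
        have haS : a ∈ S := hS _ (hΓ haΓ) (box_arg_mem_subf a)
        have hc : ¬ Prov (TL .two) (insert a Γ) Δ := fun hp => h (prov_boxL haΓ hp)
        have hm : (S \ insert a Γ).card + (S \ Δ).card < n := by
          rw [← hn]
          exact Nat.add_lt_add_right (card_sdiff_insert_lt haS haa) _
        obtain ⟨Γ', Δ', hg, hd, hh3, h4, h5, h6⟩ :=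
          IH _ hm (insert a Γ) Δ rfl (Finset.insert_subset haS hΓ) hΔ hc
        exact ⟨Γ', Δ', (Finset.subset_insert _ _).trans hg, hd, hh3, h4, h5, h6⟩
      · refine ⟨Γ, Δ, le_refl _, le_refl _, hΓ, hΔ, h, ?_⟩
        push_neg at h1 h2
        have hs1 : Saturated1 Γ Δ := by
          constructor
          · intro a b hab
            by_cases haΔ : a ∈ Δ
            · exact Or.inl haΔ
            · exact Or.inr (h1 a b hab haΔ)
          · intro a b hab
            exact h2 a b hab
        cases lv with
        | one => exact hs1
        | two =>
          refine ⟨hs1, ?_⟩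
          intro a haΓ
          by_contra haa
          exact h3 ⟨rfl, a, haΓ, haa⟩

/-! ### The canonical model -/

def MyW (S : Finset Formula) : Type :=
  {p : Finset Formula × Finset Formula //
    Saturated1 p.1 p.2 ∧ ¬ Prov GLHilbert p.1 p.2 ∧ p.1 ⊆ S ∧ p.2 ⊆ S}

def MyR (S : Finset Formula) (x y : MyW S) : Prop :=
  boxInv x.1.1 ⊂ boxInv y.1.1 ∧ boxInv x.1.1 ⊆ y.1.1

def MyV (S : Finset Formula) (x : MyW S) (p : ℕ) : Prop := Formula.var p ∈ x.1.1

theorem myR_trans (S : Finset Formula) : Transitive (MyR S) := by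
  intro x y z h1 h2
  exact ⟨h1.1.trans h2.1, h1.1.subset.trans h2.2⟩

theorem boxInv_subset {S : Finset Formula} (hS : ∀ ψ ∈ S, ψ.subf ⊆ S)
    {Γ : Finset Formula} (hΓ : Γ ⊆ S) : boxInv Γ ⊆ S := by
  intro a ha
  exact hS _ (hΓ (mem_boxInv.1 ha)) (box_arg_mem_subf a)

theorem image_box_boxInv_subset (Γ : Finset Formula) :
    (boxInv Γ).image Formula.box ⊆ Γ := by
  intro b hb
  rcases Finset.mem_image.1 hb with ⟨c, hc, rfl⟩
  exact mem_boxInv.1 hc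

theorem myR_cwf {S : Finset Formula} (hS : ∀ ψ ∈ S, ψ.subf ⊆ S) (f : ℕ → MyW S) :
    ¬ ∀ i, MyR S (f i) (f (i + 1)) := by
  intro hf
  have hmono : ∀ i, (boxInv (f 0).1.1).card + i ≤ (boxInv (f i).1.1).card := by
    intro i
    induction i with
    | zero => simp
    | succ i ih =>
      have := Finset.card_lt_card (hf i).1
      omega
  have hbound : ∀ i, (boxInv (f i).1.1).card ≤ S.card :=
    fun i => Finset.card_le_card (boxInv_subset hS (f i).2.2.2.1)
  have h1 := hmono (S.card + 1)
  have h2 := hbound (S.card + 1)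
  omega

theorem my_truth {S : Finset Formula} (hS : ∀ ψ ∈ S, ψ.subf ⊆ S) :
    ∀ (ψ : Formula) (x : MyW S),
      (ψ ∈ x.1.1 → KSat (MyR S) (MyV S) ψ x) ∧
      (ψ ∈ x.1.2 → ¬ KSat (MyR S) (MyV S) ψ x) := by
  intro ψ
  induction ψ with
  | var p =>
    intro x
    refine ⟨fun h => h, fun h hsat => x.2.2.1 (prov_of_mem hsat h)⟩
  | bot =>
    intro x
    exact ⟨fun h => absurd (prov_of_bot h) x.2.2.1, fun _ hsat => hsat⟩
  | imp a b iha ihb =>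
    intro x
    constructor
    · intro h hsata
      rcases x.2.1.1 a b h with hΔ | hΓ
      · exact absurd hsata ((iha x).2 hΔ)
      · exact (ihb x).1 hΓ
    · intro h hsat
      obtain ⟨haΓ, hbΔ⟩ := x.2.1.2 a b h
      exact ((ihb x).2 hbΔ) (hsat ((iha x).1 haΓ))
  | box a iha =>
    intro x
    constructor
    · intro h y hxy
      exact (iha y).1 (hxy.2 (mem_boxInv.2 h))
    · intro h hsat
      set B := boxInv x.1.1 with hB
      have hcons : ¬ Prov GLHilbert (B ∪ B.image .box ∪ {Formula.box a}) {a} :=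
        fun hp => x.2.2.1 (prov_boxGL h hp)
      have hΓ₀S : B ∪ B.image .box ∪ {Formula.box a} ⊆ S := by
        refine Finset.union_subset (Finset.union_subset ?_ ?_) ?_
        · exact boxInv_subset hS x.2.2.2.1
        · exact (image_box_boxInv_subset _).trans x.2.2.2.1
        · simpa using x.2.2.2.2 h
      have hΔ₀S : ({a} : Finset Formula) ⊆ S := by
        have : Formula.box a ∈ S := x.2.2.2.2 h
        simpa using hS _ this (box_arg_mem_subf a)
      obtain ⟨Γ', Δ', hg, hd, hΓ'S, hΔ'S, hcons', hsat'⟩ :=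
        saturate_aux hS .one _ _ _ rfl hΓ₀S hΔ₀S hcons
      set y : MyW S := ⟨(Γ', Δ'), hsat', hcons', hΓ'S, hΔ'S⟩ with hy
      have hBsub : B ⊆ Γ' := (by
        intro c hc
        exact hg (Finset.mem_union_left _ (Finset.mem_union_left _ hc)))
      have hBsub2 : B ⊆ boxInv Γ' := by
        intro c hc
        refine mem_boxInv.2 (hg ?_)
        exact Finset.mem_union_left _ (Finset.mem_union_right _
          (Finset.mem_image_of_mem _ hc))
      have haB : a ∉ B := by
        intro hc
        exact x.2.2.1 (prov_of_mem (mem_boxInv.1 hc) h)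
      have hxy : MyR S x y := by
        refine ⟨⟨hBsub2, fun hc => haB (hc (mem_boxInv.2 (hg (by simp)))) ⟩, hBsub⟩
      exact ((iha y).2 (hd (by simp))) (hsat y hxy)

/-! ### The tail model -/

def TW (S : Finset Formula) : Type := MyW S ⊕ ℕ

def TR (S : Finset Formula) (wp : MyW S) : TW S → TW S → Prop
  | Sum.inl x, Sum.inl y => MyR S x y
  | Sum.inr _, Sum.inl y => y = wp ∨ MyR S wp y
  | Sum.inr n, Sum.inr m => m < n
  | Sum.inl _, Sum.inr _ => False

def TV (S : Finset Formula) (wp : MyW S) : TW S → ℕ → Prop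
  | Sum.inl x, p => MyV S x p
  | Sum.inr _, p => MyV S wp p

theorem tR_trans (S : Finset Formula) (wp : MyW S) : Transitive (TR S wp) := by
  intro x y z h1 h2
  cases x with
  | inl x =>
    cases y with
    | inl y =>
      cases z with
      | inl z => exact myR_trans S h1 h2
      | inr m => exact h2
    | inr m => exact absurd h1 (by simp [TR])
  | inr n =>
    cases y with
    | inl y =>
      cases z with
      | inl z =>
        rcases h1 with rfl | h1
        · exact Or.inr h2
        · exact Or.inr (myR_trans S h1 h2)
      | inr m => exact absurd h2 (by simp [TR])
    | inr m =>
      cases z with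
      | inl z => exact h2
      | inr k => exact lt_trans h2 h1

theorem tR_cwf {S : Finset Formula} (hS : ∀ ψ ∈ S, ψ.subf ⊆ S) (wp : MyW S)
    (f : ℕ → TW S) : ¬ ∀ i, TR S wp (f i) (f (i + 1)) := by
  intro hf
  by_cases hex : ∃ i x, f i = (Sum.inl x : MyW S ⊕ ℕ)
  · obtain ⟨i, x, hx⟩ := hex
    have hstep : ∀ j (y : MyW S), f j = Sum.inl y → ∃ z, f (j + 1) = Sum.inl z ∧ MyR S y z := by
      intro j y hy
      have := hf j
      rw [hy] at this
      cases hz : f (j + 1) with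
      | inl z => rw [hz] at this; exact ⟨z, rfl, this⟩
      | inr m => rw [hz] at this; exact absurd this (by simp [TR])
    have hall : ∀ j, ∃ y, f (i + j) = Sum.inl y := by
      intro j
      induction j with
      | zero => exact ⟨x, hx⟩
      | succ j ih =>
        obtain ⟨y, hy⟩ := ih
        obtain ⟨z, hz, _⟩ := hstep _ _ hy
        exact ⟨z, hz⟩
    choose g hg using hall
    refine myR_cwf hS g (fun j => ?_)
    obtain ⟨z, hz, hr⟩ := hstep (i + j) (g j) (hg j)
    have h2 : f (i + j + 1) = Sum.inl (g (j + 1)) := hg (j + 1)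
    rw [h2] at hz
    cases hz
    exact hr
  · have hex' : ∀ i (x : MyW S), ¬ (f i = (Sum.inl x : MyW S ⊕ ℕ)) :=
      fun i x h => hex ⟨i, x, h⟩
    have hall : ∀ i, ∃ n, f i = Sum.inr n := by
      intro i
      cases hx : f i with
      | inl x => exact ((hex' i x) hx).elim
      | inr n => exact ⟨n, rfl⟩
    choose g hg using hall
    have hdec : ∀ i, g (i + 1) < g i := by
      intro i
      have := hf i
      rw [hg i, hg (i + 1)] at this
      exact this
    have hmono : ∀ i, g i + i ≤ g 0 := by
      intro i
      induction i with
      | zero => simp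
      | succ i ih => have := hdec i; omega
    have := hmono (g 0 + 1)
    omega

theorem tR_agree {S : Finset Formula} (wp : MyW S) :
    ∀ (ψ : Formula) (x : MyW S),
      KSat (TR S wp) (TV S wp) ψ (Sum.inl x) ↔ KSat (MyR S) (MyV S) ψ x := by
  intro ψ
  induction ψ with
  | var p => intro x; exact Iff.rfl
  | bot => intro x; exact Iff.rfl
  | imp a b iha ihb => intro x; exact imp_congr (iha x) (ihb x)
  | box a iha =>
    intro x
    constructor
    · intro h y hxy
      exact (iha y).1 (h (Sum.inl y) hxy)
    · intro h w' hw'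
      cases w' with
      | inl y => exact (iha y).2 (h y hw')
      | inr m => exact absurd hw' (by simp [TR])

theorem box_refute {S : Finset Formula} (hS : ∀ ψ ∈ S, ψ.subf ⊆ S) (x : MyW S) {a : Formula}
    (h : Formula.box a ∈ x.1.2) : ∃ y : MyW S, MyR S x y ∧ a ∈ y.1.2 := by
  set B := boxInv x.1.1 with hB
  have hcons : ¬ Prov GLHilbert (B ∪ B.image .box ∪ {Formula.box a}) {a} :=
    fun hp => x.2.2.1 (prov_boxGL h hp)
  have hΓ₀S : B ∪ B.image .box ∪ {Formula.box a} ⊆ S := by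
    refine Finset.union_subset (Finset.union_subset ?_ ?_) ?_
    · exact boxInv_subset hS x.2.2.2.1
    · exact (image_box_boxInv_subset _).trans x.2.2.2.1
    · simpa using x.2.2.2.2 h
  have hΔ₀S : ({a} : Finset Formula) ⊆ S := by
    have : Formula.box a ∈ S := x.2.2.2.2 h
    simpa using hS _ this (box_arg_mem_subf a)
  obtain ⟨Γ', Δ', hg, hd, hΓ'S, hΔ'S, hcons', hsat'⟩ :=
    saturate_aux hS .one _ _ _ rfl hΓ₀S hΔ₀S hcons
  refine ⟨⟨(Γ', Δ'), hsat', hcons', hΓ'S, hΔ'S⟩, ?_, hd (by simp)⟩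
  have hBsub : B ⊆ Γ' := fun c hc =>
    hg (Finset.mem_union_left _ (Finset.mem_union_left _ hc))
  have hBsub2 : B ⊆ boxInv Γ' := by
    intro c hc
    exact mem_boxInv.2 (hg (Finset.mem_union_left _ (Finset.mem_union_right _
      (Finset.mem_image_of_mem _ hc))))
  have haB : a ∉ B := fun hc => x.2.2.1 (prov_of_mem (mem_boxInv.1 hc) h)
  exact ⟨⟨hBsub2, fun hc => haB (hc (mem_boxInv.2 (hg (by simp))))⟩, hBsub⟩

theorem tail_truth {S : Finset Formula} (hS : ∀ ψ ∈ S, ψ.subf ⊆ S) (wp : MyW S)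
    (hwp2 : ∀ a, Formula.box a ∈ wp.1.1 → a ∈ wp.1.1) :
    ∀ ψ : Formula,
      (ψ ∈ wp.1.1 → ∀ n, KSat (TR S wp) (TV S wp) ψ (Sum.inr n)) ∧
      (ψ ∈ wp.1.2 → ∀ n, ¬ KSat (TR S wp) (TV S wp) ψ (Sum.inr n)) := by
  intro ψ
  induction ψ with
  | var p =>
    exact ⟨fun h n => h, fun h n hs => wp.2.2.1 (prov_of_mem hs h)⟩
  | bot =>
    exact ⟨fun h => absurd (prov_of_bot h) wp.2.2.1, fun _ n hs => hs⟩
  | imp a b iha ihb =>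
    constructor
    · intro h n hsata
      rcases wp.2.1.1 a b h with hΔ | hΓ
      · exact absurd hsata (iha.2 hΔ n)
      · exact ihb.1 hΓ n
    · intro h n hsat
      obtain ⟨haΓ, hbΔ⟩ := wp.2.1.2 a b h
      exact (ihb.2 hbΔ n) (hsat (iha.1 haΓ n))
  | box a iha =>
    constructor
    · intro h n w' hw'
      have haΓ : a ∈ wp.1.1 := hwp2 a h
      cases w' with
      | inl y =>
        rcases hw' with h' | hw'
        · rw [h']; exact (tR_agree wp a wp).2 ((my_truth hS a wp).1 haΓ)
        · exact (tR_agree wp a y).2 ((my_truth hS a y).1 (hw'.2 (mem_boxInv.2 h)))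
      | inr m => exact iha.1 haΓ m
    · intro h n hsat
      obtain ⟨y, hwy, hay⟩ := box_refute hS wp h
      have := hsat (Sum.inl y) (Or.inr hwy)
      exact ((my_truth hS a y).2 hay) ((tR_agree wp a y).1 this)

theorem stab {S : Finset Formula} (wp : MyW S) :
    ∀ ψ : Formula, ∃ N, ∀ n, N ≤ n →
      (KSat (TR S wp) (TV S wp) ψ (Sum.inr n) ↔ KSat (TR S wp) (TV S wp) ψ (Sum.inr N)) := by
  intro ψ
  induction ψ with
  | var p => exact ⟨0, fun n _ => Iff.rfl⟩
  | bot => exact ⟨0, fun n _ => Iff.rfl⟩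
  | imp a b iha ihb =>
    obtain ⟨Na, ha⟩ := iha
    obtain ⟨Nb, hb⟩ := ihb
    refine ⟨max Na Nb, fun n hn => ?_⟩
    have ha' : ∀ m, max Na Nb ≤ m →
        (KSat (TR S wp) (TV S wp) a (Sum.inr m) ↔
          KSat (TR S wp) (TV S wp) a (Sum.inr (max Na Nb))) :=
      fun m hm => (ha m (le_trans (le_max_left _ _) hm)).trans
        (ha (max Na Nb) (le_max_left _ _)).symm
    have hb' : ∀ m, max Na Nb ≤ m →
        (KSat (TR S wp) (TV S wp) b (Sum.inr m) ↔
          KSat (TR S wp) (TV S wp) b (Sum.inr (max Na Nb))) :=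
      fun m hm => (hb m (le_trans (le_max_right _ _) hm)).trans
        (hb (max Na Nb) (le_max_right _ _)).symm
    show (KSat (TR S wp) (TV S wp) a (Sum.inr n) → KSat (TR S wp) (TV S wp) b (Sum.inr n)) ↔
      (KSat (TR S wp) (TV S wp) a (Sum.inr (max Na Nb)) →
        KSat (TR S wp) (TV S wp) b (Sum.inr (max Na Nb)))
    exact imp_congr (ha' n hn) (hb' n hn)
  | box a iha =>
    obtain ⟨Na, ha⟩ := iha
    by_cases hall : ∀ m, KSat (TR S wp) (TV S wp) a (Sum.inr m)
    · refine ⟨0, fun n hn => ?_⟩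
      constructor
      · intro h w' hw'
        cases w' with
        | inl y => exact h (Sum.inl y) hw'
        | inr m => exact absurd hw' (by simp [TR])
      · intro h w' hw'
        cases w' with
        | inl y => exact h (Sum.inl y) hw'
        | inr m => exact hall m
    · push_neg at hall
      obtain ⟨m₀, hm₀⟩ := hall
      refine ⟨m₀ + 1, fun n hn => ?_⟩
      constructor
      · intro h
        exact absurd (h (Sum.inr m₀) (by show m₀ < n; omega)) hm₀
      · intro h
        exact absurd (h (Sum.inr m₀) (by show m₀ < m₀ + 1; omega)) hm₀

/-! ### Soundness -/

theorem gl_sound {φ : Formula} (h : GLHilbert φ) (W : Type) (R : W → W → Prop)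
    (htrans : Transitive R) (hcwf : ∀ f : ℕ → W, ¬ ∀ i, R (f i) (f (i + 1)))
    (v : W → ℕ → Prop) : ∀ w, KSat R v φ w := by
  induction h with
  | ax1 a b => exact fun w h1 _ => h1
  | ax2 a b c => exact fun w h1 h2 h3 => h1 h3 (h2 h3)
  | ax3 a => exact fun w h1 => Classical.byContradiction h1
  | axK a b => exact fun w h1 h2 w' hw' => h1 w' hw' (h2 w' hw')
  | axLob a =>
    intro w h1
    by_contra h2
    have h3 : ∃ w', R w w' ∧ ¬ KSat R v a w' := by
      by_contra h4
      push_neg at h4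
      exact h2 (fun w' hw' => h4 w' hw')
    obtain ⟨w0, hw0, hna0⟩ := h3
    have step : ∀ t : {x // R w x ∧ ¬ KSat R v a x},
        ∃ t' : {x // R w x ∧ ¬ KSat R v a x}, R t.1 t'.1 := by
      intro ⟨x, hx, hnx⟩
      have himp : KSat R v ((Formula.box a).imp a) x := h1 x hx
      have hnbox : ¬ KSat R v (Formula.box a) x := fun hb => hnx (himp hb)
      have : ∃ y, R x y ∧ ¬ KSat R v a y := by
        by_contra h4
        push_neg at h4
        exact hnbox (fun y hy => h4 y hy)
      obtain ⟨y, hy, hny⟩ := this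
      exact ⟨⟨y, htrans hx hy, hny⟩, hy⟩
    choose g hg using step
    refine hcwf (fun n => (g^[n] ⟨w0, hw0, hna0⟩).1) (fun n => ?_)
    show R (g^[n] ⟨w0, hw0, hna0⟩).1 (g^[n + 1] ⟨w0, hw0, hna0⟩).1
    rw [Function.iterate_succ_apply']
    exact hg _
  | mp _ _ ih1 ih2 => exact fun w => ih1 w (ih2 w)
  | nec _ ih => exact fun w w' _ => ih w'

theorem gls_sound {φ : Formula} (h : GLSHilbert φ) (M : GLModel) :
    ∃ S : Finset Formula, ∀ w, M.reflexiveFor w S → M.sat w φ := by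
  induction h with
  | gl h =>
    exact ⟨∅, fun w _ => gl_sound h M.World M.R M.trans M.cwf M.val w⟩
  | refl α =>
    exact ⟨{Formula.box α}, fun w hw => hw α (Finset.mem_singleton_self _)⟩
  | mp _ _ ih1 ih2 =>
    obtain ⟨S1, h1⟩ := ih1
    obtain ⟨S2, h2⟩ := ih2
    refine ⟨S1 ∪ S2, fun w hw => ?_⟩
    have hw1 : M.reflexiveFor w S1 := fun α hα => hw α (Finset.mem_union_left _ hα)
    have hw2 : M.reflexiveFor w S2 := fun α hα => hw α (Finset.mem_union_right _ hα)
    exact h1 w hw1 (h2 w hw2)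

/-! ### Completeness -/

theorem gls_complete (φ : Formula)
    (H : ∀ M : GLModel, ∃ S : Finset Formula, ∀ w : M.World,
      M.reflexiveFor w S → M.sat w φ) : GLSHilbert φ := by
  by_contra hφ
  set S := φ.subf with hSdef
  have hS : ∀ ψ ∈ S, ψ.subf ⊆ S := fun ψ h => subf_trans h
  have hcons : ¬ Prov GLSHilbert ∅ {φ} := by
    intro hp
    have heq : SeqCtx ∅ {φ} = insert (FNeg φ) ∅ := by ext x; simp [SeqCtx]
    rw [Prov, heq] at hp
    have h2 := hp.deduction (fun _ h => GLSHilbert.gl h)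
    exact hφ ((GLSHilbert.gl (GLHilbert.ax3 φ)).mp (ctx_empty_gls h2))
  obtain ⟨Γp, Δp, _, hd, hΓpS, hΔpS, hconsp, hsatp⟩ :=
    saturate_aux hS .two _ ∅ {φ} rfl (by simp)
      (by simpa using self_mem_subf φ) hcons
  have hcons1 : ¬ Prov GLHilbert Γp Δp :=
    fun hp => hconsp (Ctx.mono (fun _ h => GLSHilbert.gl h) (fun _ h => h) hp)
  have hsat2 : Saturated2 Γp Δp := hsatp
  set wp : MyW S := ⟨(Γp, Δp), hsat2.1, hcons1, hΓpS, hΔpS⟩ with hwp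
  set M : GLModel :=
    ⟨TW S, ⟨Sum.inr 0⟩, TR S wp, tR_trans S wp, tR_cwf hS wp, TV S wp⟩ with hM
  obtain ⟨Sig, hSig⟩ := H M
  set g : Formula → ℕ := fun s => Classical.choose (stab wp s) with hgdef
  set N := Sig.sup g with hN
  have hrefl : M.reflexiveFor (Sum.inr N) Sig := by
    intro α hα hbox
    have hgs := Classical.choose_spec (stab wp (Formula.box α))
    have hle : Classical.choose (stab wp (Formula.box α)) ≤ N := Finset.le_sup (f := g) hα
    have h1 : KSat (TR S wp) (TV S wp) (Formula.box α) (Sum.inr (N + 1)) :=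
      (hgs (N + 1) (by omega)).mpr ((hgs N hle).mp hbox)
    exact h1 (Sum.inr N) (by show N < N + 1; omega)
  have hsatφ : KSat (TR S wp) (TV S wp) φ (Sum.inr N) := hSig (Sum.inr N) hrefl
  exact (tail_truth hS wp hsat2.2 φ).2 (hd (Finset.mem_singleton_self _)) N hsatφ

theorem gls_characterization_c2' (φ : Formula) :
    GLSHilbert φ ↔
      ∀ M : GLModel, ∃ S : Finset Formula, ∀ w : M.World,
        M.reflexiveFor w S → M.sat w φ :=
  ⟨fun h M => gls_sound h M, gls_complete φ⟩

/-- Characterization C2: φ is a theorem of GLS iff for every GL-model there is a finite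
set Σ of formulas such that φ is true at every Σ-reflexive world. -/
theorem gls_characterization_c2 (φ : Formula) :
    GLSHilbert φ ↔
      ∀ M : GLModel, ∃ S : Finset Formula, ∀ w : M.World,
        M.reflexiveFor w S → M.sat w φ := by
  exact ⟨fun h M => gls_sound h M, gls_complete φ⟩
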